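/- Fix s > 1/2. There exists a constant C > 0 such that for every measurable function F : ℝ² → ℂ, ∫_ℝ ( ∫_ℝ |F(ξ,β)| dβ )² dξ ≤ C ∫_{ℝ²} ⟨ξ² + |ξβ − ξ⁶|⟩^{s} (|ξβ − ξ⁶|^{1/2} / |ξ|) |F(ξ,β)|² dξ dβ. (This is the key estimate in the trace lemma showing that ℋ^s_{x,t} embeds continuously into C⁰_t L²_x for s > 1/2.) -/

import Mathlib

/-!
Fix `ξ ≠ 0` and write `u = ξβ − ξ⁶`. Cauchy–Schwarz in `β` gives
`(∫ |F| dβ)² ≤ (∫ w⁻¹ dβ) (∫ w |F|² dβ)` for the weight `w` of the right-hand side. Since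
`⟨ξ² + |u|⟩ ≥ ⟨u⟩`, we have `w⁻¹ ≤ |ξ| ⟨u⟩^{-s} |u|^{-1/2}`, and the substitution `β ↦ u` has
Jacobian `|ξ|`, so `∫ w⁻¹ dβ ≤ ∫ ⟨u⟩^{-s} |u|^{-1/2} du`, which is finite exactly when `s > 1/2`.
Integrating in `ξ` gives the estimate with any `C` exceeding this integral.
-/

open MeasureTheory
open scoped ENNReal

/-- Japanese bracket `⟨x⟩ = (1 + x²)^{1/2}`. -/
noncomputable def jap (x : ℝ) : ℝ := Real.sqrt (1 + x ^ 2)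

open Set Metric Module

namespace ENNReal

variable {α : Type*} [MeasurableSpace α] {μ : Measure α}

theorem lintegral_mul_sq_le {f g : α → ℝ≥0∞} (hf : AEMeasurable f μ) (hg : AEMeasurable g μ) :
    (∫⁻ x, f x * g x ∂μ) ^ 2 ≤ (∫⁻ x, f x ^ 2 ∂μ) * ∫⁻ x, g x ^ 2 ∂μ := by
  have holder := ENNReal.lintegral_mul_le_Lp_mul_Lq μ Real.HolderConjugate.two_two hf hg
  simp only [one_div, rpow_two, Pi.mul_apply] at holder
  calc (∫⁻ x, f x * g x ∂μ) ^ 2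
      ≤ ((∫⁻ x, f x ^ 2 ∂μ) ^ (2⁻¹ : ℝ) * (∫⁻ x, g x ^ 2 ∂μ) ^ (2⁻¹ : ℝ)) ^ 2 := by gcongr
    _ = (∫⁻ x, f x ^ 2 ∂μ) * ∫⁻ x, g x ^ 2 ∂μ := by
      rw [mul_pow, ← rpow_two, ← rpow_two, rpow_inv_rpow two_ne_zero, rpow_inv_rpow two_ne_zero]

theorem lintegral_sq_le_lintegral_inv_mul {f w : α → ℝ≥0∞} (hf : AEMeasurable f μ)
    (hw : AEMeasurable w μ) (hw0 : ∀ᵐ x ∂μ, w x ≠ 0) (hw_top : ∀ᵐ x ∂μ, w x ≠ ∞) :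
    (∫⁻ x, f x ∂μ) ^ 2 ≤ (∫⁻ x, (w x)⁻¹ ∂μ) * ∫⁻ x, w x * f x ^ 2 ∂μ := by
  have hsplit : ∀ᵐ x ∂μ, f x = (w x)⁻¹ ^ (2⁻¹ : ℝ) * (w x * f x ^ 2) ^ (2⁻¹ : ℝ) := by
    filter_upwards [hw0, hw_top] with x h0 h_top
    rw [← mul_rpow_of_nonneg _ _ (by norm_num), ← mul_assoc, ENNReal.inv_mul_cancel h0 h_top,
      one_mul, ← rpow_two, rpow_rpow_inv two_ne_zero]
  have hsq : ∀ y : ℝ≥0∞, (y ^ (2⁻¹ : ℝ)) ^ 2 = y := fun y => by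
    rw [← rpow_two, rpow_inv_rpow two_ne_zero]
  rw [lintegral_congr_ae hsplit]
  refine (lintegral_mul_sq_le (hw.inv.pow_const _) ((hw.mul (hf.pow_const 2)).pow_const _)).trans ?_
  simp only [hsq, Pi.mul_apply, Pi.inv_apply, le_refl]

end ENNReal

@[fun_prop]
theorem continuous_jap : Continuous jap := by unfold jap; fun_prop

theorem jap_pos (x : ℝ) : 0 < jap x := Real.sqrt_pos.2 (by positivity)

theorem one_le_jap (x : ℝ) : 1 ≤ jap x := Real.one_le_sqrt.2 (by nlinarith)

theorem jap_le_jap {x y : ℝ} (hx : 0 ≤ x) (hxy : x ≤ y) : jap x ≤ jap y :=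
  Real.sqrt_le_sqrt (by nlinarith)

theorem jap_rpow (x r : ℝ) : jap x ^ r = (1 + x ^ 2) ^ (r / 2) := by
  rw [jap, Real.sqrt_eq_rpow, ← Real.rpow_mul (by positivity), one_div_mul_eq_div]

theorem jap_rpow_neg_mul_rpow_neg_le {s a x : ℝ} (ha : 0 ≤ a) (hx : 1 ≤ x) :
    jap x ^ (-s) * x ^ (-a) ≤ 2 ^ (a / 2) * (1 + x ^ 2) ^ (-(s + a) / 2) := by
  have hx2 : (1 + x ^ 2) / 2 ≤ x ^ 2 := by nlinarith
  calc jap x ^ (-s) * x ^ (-a) = (1 + x ^ 2) ^ (-s / 2) * (x ^ (2 : ℝ)) ^ (-a / 2) := by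
        rw [jap_rpow, ← Real.rpow_mul (by linarith)]
        ring_nf
    _ ≤ (1 + x ^ 2) ^ (-s / 2) * ((1 + x ^ 2) / 2) ^ (-a / 2) := by
        rw [Real.rpow_two]
        gcongr ?_ * ?_
        exact Real.rpow_le_rpow_of_nonpos (by positivity) hx2 (by linarith)
    _ = 2 ^ (a / 2) * (1 + x ^ 2) ^ (-(s + a) / 2) := by
        rw [Real.div_rpow (by positivity) zero_le_two, neg_div 2 a, Real.rpow_neg zero_le_two,
          neg_add, add_div, Real.rpow_add (by positivity)]
        field_simp

section Integrability

variable {E : Type*} [NormedAddCommGroup E] [NormedSpace ℝ E] [FiniteDimensional ℝ E]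
  [MeasurableSpace E] [BorelSpace E] {μ : Measure E} [μ.IsAddHaarMeasure]

/-- Near `0` the bracket is `≥ 1` and `‖x‖^{-a}` is integrable as `a < d`; away from `0`,
`‖x‖ ≍ ⟨x⟩` and `⟨x⟩^{-(s+a)}` is integrable as `s + a > d`. -/
theorem integrable_jap_rpow_neg_mul_norm_rpow_neg {s a : ℝ} (ha : 0 ≤ a)
    (had : a < finrank ℝ E) (hdsa : finrank ℝ E < s + a) :
    Integrable (fun x : E => jap ‖x‖ ^ (-s) * ‖x‖ ^ (-a)) μ := by
  have hmeas : AEStronglyMeasurable (fun x : E => jap ‖x‖ ^ (-s) * ‖x‖ ^ (-a)) μ :=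
    Measurable.aestronglyMeasurable (by fun_prop)
  have hnonneg (x : E) : 0 ≤ jap ‖x‖ ^ (-s) * ‖x‖ ^ (-a) :=
    mul_nonneg (Real.rpow_nonneg (jap_pos _).le _) (Real.rpow_nonneg (norm_nonneg _) _)
  have hd : 1 ≤ finrank ℝ E := by exact_mod_cast (by linarith : (0 : ℝ) < finrank ℝ E)
  rw [← integrableOn_univ, ← union_compl_self (ball (0 : E) 1), integrableOn_union]
  constructor
  · refine integrableOn_ball_of_norm_le_rpow hd had (C := 1) (ae_of_all _ fun x => ?_)
      hmeas
    rw [Real.norm_of_nonneg (hnonneg x), one_mul]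
    exact mul_le_of_le_one_left (by positivity)
      (Real.rpow_le_one_of_one_le_of_nonpos (one_le_jap _) (by linarith))
  · refine ((integrable_rpow_neg_one_add_norm_sq hdsa).const_mul (2 ^ (a / 2))).integrableOn.mono'
      hmeas.restrict ((ae_restrict_iff' measurableSet_ball.compl).2 (ae_of_all _ ?_))
    intro x hx
    rw [Real.norm_of_nonneg (hnonneg x)]
    exact jap_rpow_neg_mul_rpow_neg_le ha (by simpa using hx)

end Integrability

theorem lintegral_comp_mul_left (g : ℝ → ℝ≥0∞) {a : ℝ} (ha : a ≠ 0) :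
    ∫⁻ x, g (a * x) = ENNReal.ofReal |a⁻¹| * ∫⁻ x, g x := by
  calc ∫⁻ x, g (a * x) = ∫⁻ x, g x ∂(Measure.map (a * ·) volume) :=
        (lintegral_map_equiv g (Homeomorph.mulLeft₀ a ha).toMeasurableEquiv).symm
    _ = ENNReal.ofReal |a⁻¹| * ∫⁻ x, g x := by
        rw [Real.map_volume_mul_left ha, lintegral_smul_measure, smul_eq_mul]

/-- The Fourier-side weight of the squared `ℋ^s_{x,t}` norm. -/
noncomputable def traceWeight (s : ℝ) (p : ℝ × ℝ) : ℝ :=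
  jap (p.1 ^ 2 + |p.1 * p.2 - p.1 ^ 6|) ^ s * (|p.1 * p.2 - p.1 ^ 6| ^ ((1:ℝ)/2) / |p.1|)

@[fun_prop]
theorem measurable_traceWeight (s : ℝ) : Measurable (traceWeight s) := by
  unfold traceWeight; fun_prop

theorem traceWeight_nonneg (s : ℝ) (p : ℝ × ℝ) : 0 ≤ traceWeight s p :=
  mul_nonneg (Real.rpow_nonneg (jap_pos _).le _) (by positivity)

theorem traceWeight_pos {s ξ β : ℝ} (hξ : ξ ≠ 0) (hu : ξ * β - ξ ^ 6 ≠ 0) :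
    0 < traceWeight s (ξ, β) :=
  mul_pos (Real.rpow_pos_of_pos (jap_pos _) _)
    (div_pos (Real.rpow_pos_of_pos (abs_pos.2 hu) _) (abs_pos.2 hξ))

theorem ae_mul_sub_pow_six_ne_zero {ξ : ℝ} (hξ : ξ ≠ 0) : ∀ᵐ β : ℝ, ξ * β - ξ ^ 6 ≠ 0 := by
  filter_upwards [volume.ae_ne (ξ ^ 5)] with β hβ h
  exact hβ (mul_left_cancel₀ hξ (by linear_combination h))

noncomputable def traceKernel (s u : ℝ) : ℝ := jap |u| ^ (-s) * |u| ^ (-(1/2) : ℝ)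

theorem lintegral_traceKernel_lt_top {s : ℝ} (hs : 1/2 < s) :
    ∫⁻ u, ENNReal.ofReal (traceKernel s u) < ∞ := by
  have hint := integrable_jap_rpow_neg_mul_norm_rpow_neg (E := ℝ) (μ := volume) (s := s)
    (a := 1/2) (by norm_num) (by norm_num) (by norm_num; linarith)
  simpa only [Real.norm_eq_abs, traceKernel] using hint.lintegral_lt_top

theorem inv_traceWeight_le {s : ℝ} (hs : 0 ≤ s) (ξ β : ℝ) :
    (traceWeight s (ξ, β))⁻¹ ≤ |ξ| * traceKernel s (ξ * β - ξ ^ 6) := by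
  set u := ξ * β - ξ ^ 6
  have hjap : jap |u| ^ s ≤ jap (ξ ^ 2 + |u|) ^ s :=
    Real.rpow_le_rpow (jap_pos _).le (jap_le_jap (abs_nonneg u) (by nlinarith)) hs
  have hinv : (traceWeight s (ξ, β))⁻¹ =
      |ξ| * ((jap (ξ ^ 2 + |u|) ^ s)⁻¹ * (|u| ^ (1/2 : ℝ))⁻¹) := by
    rw [traceWeight, mul_inv, inv_div]
    ring
  rw [hinv, traceKernel, Real.rpow_neg (jap_pos _).le, Real.rpow_neg (abs_nonneg u)]
  gcongr
  exact Real.rpow_pos_of_pos (jap_pos _) _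

/-- Substituting `u = ξβ − ξ⁶` in the fibre over `ξ` absorbs the factor `|ξ|` of the weight. -/
theorem lintegral_inv_traceWeight_le {s : ℝ} (hs : 0 ≤ s) {ξ : ℝ} (hξ : ξ ≠ 0) :
    ∫⁻ β, (ENNReal.ofReal (traceWeight s (ξ, β)))⁻¹ ≤ ∫⁻ u, ENNReal.ofReal (traceKernel s u) := by
  calc ∫⁻ β, (ENNReal.ofReal (traceWeight s (ξ, β)))⁻¹
      ≤ ∫⁻ β, ENNReal.ofReal |ξ| * ENNReal.ofReal (traceKernel s (ξ * β - ξ ^ 6)) := by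
        refine lintegral_mono_ae ?_
        filter_upwards [ae_mul_sub_pow_six_ne_zero hξ] with β hu
        rw [← ENNReal.ofReal_inv_of_pos (traceWeight_pos hξ hu),
          ← ENNReal.ofReal_mul (abs_nonneg ξ)]
        exact ENNReal.ofReal_le_ofReal (inv_traceWeight_le hs ξ β)
    _ = ENNReal.ofReal |ξ| * (ENNReal.ofReal |ξ⁻¹| * ∫⁻ u, ENNReal.ofReal (traceKernel s u)) := by
        rw [lintegral_const_mul' _ _ ENNReal.ofReal_ne_top,
          lintegral_comp_mul_left (fun v => ENNReal.ofReal (traceKernel s (v - ξ ^ 6))) hξ,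
          lintegral_sub_right_eq_self (fun u => ENNReal.ofReal (traceKernel s u))]
    _ = ∫⁻ u, ENNReal.ofReal (traceKernel s u) := by
        rw [← mul_assoc, ← ENNReal.ofReal_mul (abs_nonneg ξ), ← abs_mul, mul_inv_cancel₀ hξ,
          abs_one, ENNReal.ofReal_one, one_mul]

theorem sq_lintegral_le_lintegral_traceKernel_mul {s : ℝ} (hs : 0 ≤ s) {ξ : ℝ} (hξ : ξ ≠ 0)
    {g : ℝ → ℝ≥0∞} (hg : AEMeasurable g) :
    (∫⁻ β, g β) ^ 2 ≤ (∫⁻ u, ENNReal.ofReal (traceKernel s u)) *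
      ∫⁻ β, ENNReal.ofReal (traceWeight s (ξ, β)) * g β ^ 2 := by
  have hpos : ∀ᵐ β, ENNReal.ofReal (traceWeight s (ξ, β)) ≠ 0 := by
    filter_upwards [ae_mul_sub_pow_six_ne_zero hξ] with β hu
    exact (ENNReal.ofReal_pos.2 (traceWeight_pos hξ hu)).ne'
  refine (ENNReal.lintegral_sq_le_lintegral_inv_mul hg (by fun_prop) hpos
    (ae_of_all _ fun _ => ENNReal.ofReal_ne_top)).trans ?_
  gcongr ?_ * _
  exact lintegral_inv_traceWeight_le hs hξ

/-- For `s > 1/2`,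
`∫_ℝ (∫_ℝ |F(ξ,β)| dβ)² dξ ≤ C ∫_{ℝ²} ⟨ξ² + |ξβ − ξ⁶|⟩^s (|ξβ − ξ⁶|^{1/2}/|ξ|) |F(ξ,β)|² dξ dβ`,
the key estimate in the trace lemma `ℋ^s_{x,t} ↪ C⁰_t L²_x`. -/
theorem stmt4 (s : ℝ) (hs : 1/2 < s) :
    ∃ C > (0:ℝ), ∀ F : ℝ × ℝ → ℂ, Measurable F →
      ∫⁻ ξ : ℝ, (∫⁻ β : ℝ, ENNReal.ofReal ‖F (ξ, β)‖) ^ 2 ≤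
        ENNReal.ofReal C *
          ∫⁻ p : ℝ × ℝ, ENNReal.ofReal
            (jap (p.1 ^ 2 + |p.1 * p.2 - p.1 ^ 6|) ^ s *
              (|p.1 * p.2 - p.1 ^ 6| ^ ((1:ℝ)/2) / |p.1|) * ‖F p‖ ^ 2) := by
  set K := ∫⁻ u, ENNReal.ofReal (traceKernel s u)
  have hK : K ≤ ENNReal.ofReal (K.toReal + 1) :=
    (ENNReal.ofReal_toReal (lintegral_traceKernel_lt_top hs).ne).symm.le.trans
      (ENNReal.ofReal_le_ofReal (by linarith))
  refine ⟨K.toReal + 1, by positivity, fun F hF => ?_⟩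
  have hsplit (p : ℝ × ℝ) : ENNReal.ofReal (traceWeight s p * ‖F p‖ ^ 2) =
      ENNReal.ofReal (traceWeight s p) * ENNReal.ofReal ‖F p‖ ^ 2 := by
    rw [ENNReal.ofReal_mul (traceWeight_nonneg s p), ENNReal.ofReal_pow (norm_nonneg _)]
  show _ ≤ _ * ∫⁻ p, ENNReal.ofReal (traceWeight s p * ‖F p‖ ^ 2)
  simp only [hsplit]
  rw [Measure.volume_eq_prod, lintegral_prod _ (by fun_prop)]
  calc ∫⁻ ξ, (∫⁻ β, ENNReal.ofReal ‖F (ξ, β)‖) ^ 2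
      ≤ ∫⁻ ξ, K * ∫⁻ β, ENNReal.ofReal (traceWeight s (ξ, β)) * ENNReal.ofReal ‖F (ξ, β)‖ ^ 2 := by
        refine lintegral_mono_ae ?_
        filter_upwards [volume.ae_ne 0] with ξ hξ
        exact sq_lintegral_le_lintegral_traceKernel_mul (by linarith) hξ (by fun_prop)
    _ = K * ∫⁻ ξ, ∫⁻ β, ENNReal.ofReal (traceWeight s (ξ, β)) * ENNReal.ofReal ‖F (ξ, β)‖ ^ 2 :=
        lintegral_const_mul' _ _ (lintegral_traceKernel_lt_top hs).ne
    _ ≤ _ := by gcongr
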